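/- Let t > 0, −π/3 < θ < π/3 and (θ, t) ≠ (0, 1). There is no decomposition ρ₀(θ,t) = Σ_{i=1}^{n₁} t_{1i}|z₁(1, β_{1i}, γ_{1i})⟩⟨z₁(1, β_{1i}, γ_{1i})| + Σ_{k=2}^{4} Σ_{i=1}^{n_k} (t_{ki}/t²)|z_k(β_{ki})⟩⟨z_k(β_{ki})| with all t_{ki} > 0, all β_{ki}, γ_{1i} of modulus one, and n₁ = 3, n₂ = n₃ = n₄ = 2. Consequently every such decomposition satisfies n₁ + n₂ + n₃ + n₄ ≥ 10. -/

import Mathlib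

open Complex Matrix BigOperators

/-- The tensor (Kronecker) product of two vectors in `ℂ³`, as a vector in `ℂ⁹`:
the component `ξ_i η_j` sits at index `3i + j` (0-based). -/
def kron (ξ η : Fin 3 → ℂ) : Fin 9 → ℂ :=
  fun k => ξ ⟨k.val / 3, by have := k.isLt; omega⟩ * η ⟨k.val % 3, by have := k.isLt; omega⟩

/-- `z₁(a₁,a₂,a₃) = (a₁,a₂,a₃) ⊗ (ā₁,ā₂,ā₃)`. -/
noncomputable def z1 (a₁ a₂ a₃ : ℂ) : Fin 9 → ℂ :=
  kron ![a₁, a₂, a₃] ![starRingEnd ℂ a₁, starRingEnd ℂ a₂, starRingEnd ℂ a₃]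

/-- `z₂(β) = (0, √t β, 1) ⊗ (0, √t β̄, t e^{iθ})`. -/
noncomputable def z2 (t θ : ℝ) (β : ℂ) : Fin 9 → ℂ :=
  kron ![0, (Real.sqrt t : ℂ) * β, 1]
       ![0, (Real.sqrt t : ℂ) * starRingEnd ℂ β, (t : ℂ) * exp (θ * I)]

/-- `z₃(β) = (1, 0, √t β) ⊗ (t e^{iθ}, 0, √t β̄)`. -/
noncomputable def z3 (t θ : ℝ) (β : ℂ) : Fin 9 → ℂ :=
  kron ![1, 0, (Real.sqrt t : ℂ) * β]
       ![(t : ℂ) * exp (θ * I), 0, (Real.sqrt t : ℂ) * starRingEnd ℂ β]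

/-- `z₄(β) = (√t β, 1, 0) ⊗ (√t β̄, t e^{iθ}, 0)`. -/
noncomputable def z4 (t θ : ℝ) (β : ℂ) : Fin 9 → ℂ :=
  kron ![(Real.sqrt t : ℂ) * β, 1, 0]
       ![(Real.sqrt t : ℂ) * starRingEnd ℂ β, (t : ℂ) * exp (θ * I), 0]

/-- The pure (unnormalized) state `|z⟩⟨z|`. -/
noncomputable def rank1 (v : Fin 9 → ℂ) : Matrix (Fin 9) (Fin 9) ℂ :=
  vecMulVec v (star v)

/-- The separable state `ρ₀(θ,t)`. -/
noncomputable def rho0 (θ t : ℝ) : Matrix (Fin 9) (Fin 9) ℂ :=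
  !![3, 0, 0, 0, 1 + exp (-θ * I), 0, 0, 0, 1 + exp (θ * I);
     0, 1 + (t : ℂ), 0, 0, 0, 0, 0, 0, 0;
     0, 0, 1 + 1 / (t : ℂ), 0, 0, 0, 0, 0, 0;
     0, 0, 0, 1 + 1 / (t : ℂ), 0, 0, 0, 0, 0;
     1 + exp (θ * I), 0, 0, 0, 3, 0, 0, 0, 1 + exp (-θ * I);
     0, 0, 0, 0, 0, 1 + (t : ℂ), 0, 0, 0;
     0, 0, 0, 0, 0, 0, 1 + (t : ℂ), 0, 0;
     0, 0, 0, 0, 0, 0, 0, 1 + 1 / (t : ℂ), 0;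
     1 + exp (-θ * I), 0, 0, 0, 1 + exp (θ * I), 0, 0, 0, 3]


/-!
Compare entries of both sides. The diagonal entries force every family of weights `t_k` to
sum to `1`. Vanishing off-diagonal entries force the first moments `∑ t₄ β₄`, `∑ t₃ β₃`,
`∑ t₂ β̄₂` and `∑ t₁ β̄₁`, `∑ t₁ γ₁`, `∑ t₁ β̄₁ γ₁` to vanish, so the families `z₂, z₃, z₄` need
at least two terms each, and `z₁` at least three. If `z₃` and `z₄` have exactly two terms, their
phases are antipodal, and the entries `(1,3)` and `(6,2)` (indices from `0`) give
`‖∑ t₁ β̄₁²‖ = ‖∑ t₁ γ₁²‖ = 1`. By strict convexity of the norm all `β̄₁²` and all `γ₁²` coincide,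
so `(β̄₁, γ₁)` only takes the four sign patterns `(±b, ±c)`, and the vanishing moments force all
four of them to occur: then `z₁` needs four terms.
-/

open ComplexConjugate Finset

lemma eq_of_norm_sum_smul_eq {ι V : Type*} [Fintype ι] [NormedAddCommGroup V] [NormedSpace ℝ V]
    [StrictConvexSpace ℝ V] {w : ι → ℝ} {x : ι → V} {r : ℝ} (hw : ∀ i, 0 < w i)
    (h1 : ∑ i, w i = 1) (hx : ∀ i, ‖x i‖ ≤ r) (hr : ‖∑ i, w i • x i‖ = r) (i j : ι) :
    x i = x j := by
  by_contra hij
  exact (norm_sum_lt_of_strictConvexSpace (fun k _ ↦ (hw k).le) h1 (mem_univ i) (mem_univ j) hij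
    (hw i).ne' (hw j).ne' fun k _ ↦ hx k).ne hr

lemma four_le_card_of_sign_moments {ι K : Type*} [Fintype ι] [Field K] [CharZero K]
    {w b c : ι → K} {b₀ c₀ : K} (hb₀ : b₀ ≠ 0) (hc₀ : c₀ ≠ 0)
    (hb : ∀ i, b i ^ 2 = b₀ ^ 2) (hc : ∀ i, c i ^ 2 = c₀ ^ 2) (hw : ∑ i, w i ≠ 0)
    (hwb : ∑ i, w i * b i = 0) (hwc : ∑ i, w i * c i = 0) (hwbc : ∑ i, w i * (b i * c i) = 0) :
    4 ≤ Fintype.card ι := by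
  have hpattern (s r : ℤˣ) : ∃ i, b i = (s : ℤ) * b₀ ∧ c i = (r : ℤ) * c₀ := by
    set σ : K := ((s : ℤ) : K)
    set ρ : K := ((r : ℤ) : K)
    have hσ : σ ^ 2 = 1 := by rcases Int.units_eq_one_or s with rfl | rfl <;> simp [σ]
    have hρ : ρ ^ 2 = 1 := by rcases Int.units_eq_one_or r with rfl | rfl <;> simp [ρ]
    -- `(b + σ b₀) (c + ρ c₀)` vanishes unless `(b, c) = (σ b₀, ρ c₀)`, but its `w`-sum does not
    have hsum : ∑ i, w i * ((b i + σ * b₀) * (c i + ρ * c₀)) = σ * ρ * b₀ * c₀ * ∑ i, w i := by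
      have (i : ι) : w i * ((b i + σ * b₀) * (c i + ρ * c₀)) = w i * (b i * c i)
          + ρ * c₀ * (w i * b i) + σ * b₀ * (w i * c i) + σ * ρ * b₀ * c₀ * w i := by ring
      simp only [this, sum_add_distrib, ← mul_sum, hwb, hwc, hwbc]
      ring
    have hne : σ * ρ * b₀ * c₀ * ∑ i, w i ≠ 0 := by simp [σ, ρ, hb₀, hc₀, hw]
    obtain ⟨i, -, hi⟩ := exists_ne_zero_of_sum_ne_zero (hsum.trans_ne hne)
    have hb' : (b i - σ * b₀) * (b i + σ * b₀) = 0 := by linear_combination hb i - b₀ ^ 2 * hσ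
    have hc' : (c i - ρ * c₀) * (c i + ρ * c₀) = 0 := by linear_combination hc i - c₀ ^ 2 * hρ
    have hi' := mul_ne_zero_iff.1 (right_ne_zero_of_mul hi)
    exact ⟨i, sub_eq_zero.1 ((mul_eq_zero.1 hb').resolve_right hi'.1),
      sub_eq_zero.1 ((mul_eq_zero.1 hc').resolve_right hi'.2)⟩
  choose f hfb hfc using hpattern
  have hf : Function.Injective fun p : ℤˣ × ℤˣ ↦ f p.1 p.2 := by
    rintro ⟨s, r⟩ ⟨s', r'⟩ (h : f s r = f s' r')
    have hs := (hfb s r).symm.trans (h ▸ hfb s' r')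
    have hr := (hfc s r).symm.trans (h ▸ hfc s' r')
    simp [hb₀, hc₀] at hs hr
    simp [Units.ext_iff, hs, hr]
  simpa using Fintype.card_le_of_injective _ hf

lemma ne_zero_of_norm_eq_one {z : ℂ} (h : ‖z‖ = 1) : z ≠ 0 :=
  norm_ne_zero_iff.1 (h ▸ one_ne_zero)

lemma sum_ofReal_ne_zero {ι : Type*} [Fintype ι] {w : ι → ℝ} (h1 : ∑ i, w i = 1) :
    ∑ i, (w i : ℂ) ≠ 0 := by
  rw [← ofReal_sum, h1]
  exact one_ne_zero

lemma two_le_of_sum_mul_eq_zero {n : ℕ} {w : Fin n → ℝ} {x : Fin n → ℂ} (hw : ∀ i, 0 < w i)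
    (hx : ∀ i, ‖x i‖ = 1) (h1 : ∑ i, w i = 1) (h : ∑ i, (w i : ℂ) * x i = 0) : 2 ≤ n := by
  by_contra! hn
  interval_cases n
  · simp at h1
  · simp [(hw 0).ne', ne_zero_of_norm_eq_one (hx 0)] at h

lemma antipodal_of_sum_mul_eq_zero {w : Fin 2 → ℝ} {x : Fin 2 → ℂ} (hw : ∀ i, 0 < w i)
    (hx : ∀ i, ‖x i‖ = 1) (h : ∑ i, (w i : ℂ) * x i = 0) : x 1 = -x 0 := by
  rw [Fin.sum_univ_two] at h
  have hw' : w 0 = w 1 := by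
    simpa [hx, abs_of_pos (hw 0), abs_of_pos (hw 1)] using
      congrArg norm (eq_neg_of_add_eq_zero_left h)
  have : (w 0 : ℂ) * (x 0 + x 1) = 0 := by rw [hw'] at h ⊢; linear_combination h
  simpa [(hw 0).ne', eq_neg_iff_add_eq_zero, add_comm] using this

lemma norm_sum_mul_sq_eq_one {w : Fin 2 → ℝ} {x : Fin 2 → ℂ} (hw : ∀ i, 0 < w i)
    (hx : ∀ i, ‖x i‖ = 1) (h1 : ∑ i, w i = 1) (h : ∑ i, (w i : ℂ) * x i = 0) :
    ‖∑ i, (w i : ℂ) * x i ^ 2‖ = 1 := by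
  have h1' : (w 0 : ℂ) + w 1 = 1 := by exact_mod_cast (Fin.sum_univ_two w).symm.trans h1
  rw [Fin.sum_univ_two, antipodal_of_sum_mul_eq_zero hw hx h, neg_sq, ← add_mul, h1', one_mul,
    norm_pow, hx, one_pow]

lemma three_le_of_moments {n : ℕ} {w : Fin n → ℝ} {b c : Fin n → ℂ} (hw : ∀ i, 0 < w i)
    (hb : ∀ i, ‖b i‖ = 1) (hc : ∀ i, ‖c i‖ = 1) (h1 : ∑ i, w i = 1)
    (hwb : ∑ i, (w i : ℂ) * b i = 0) (hwc : ∑ i, (w i : ℂ) * c i = 0)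
    (hwbc : ∑ i, (w i : ℂ) * (b i * c i) = 0) : 3 ≤ n := by
  have h2 := two_le_of_sum_mul_eq_zero hw hb h1 hwb
  by_contra! h3
  obtain rfl : n = 2 := by omega
  have hsq {x : Fin 2 → ℂ} (hx : ∀ i, ‖x i‖ = 1) (h : ∑ i, (w i : ℂ) * x i = 0) (i : Fin 2) :
      x i ^ 2 = x 0 ^ 2 := by
    fin_cases i
    · rfl
    · simp [antipodal_of_sum_mul_eq_zero hw hx h]
  have := four_le_card_of_sign_moments (ne_zero_of_norm_eq_one (hb 0))
    (ne_zero_of_norm_eq_one (hc 0)) (hsq hb hwb) (hsq hc hwc) (sum_ofReal_ne_zero h1) hwb hwc hwbc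
  simp at this

lemma four_le_card_of_moments {ι : Type*} [Fintype ι] {w : ι → ℝ} {b c : ι → ℂ}
    (hw : ∀ i, 0 < w i) (hb : ∀ i, ‖b i‖ = 1) (hc : ∀ i, ‖c i‖ = 1) (h1 : ∑ i, w i = 1)
    (hwb : ∑ i, (w i : ℂ) * b i = 0) (hwc : ∑ i, (w i : ℂ) * c i = 0)
    (hwbc : ∑ i, (w i : ℂ) * (b i * c i) = 0)
    (hb2 : ‖∑ i, (w i : ℂ) * b i ^ 2‖ = 1) (hc2 : ‖∑ i, (w i : ℂ) * c i ^ 2‖ = 1) :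
    4 ≤ Fintype.card ι := by
  obtain ⟨j, -, -⟩ := exists_ne_zero_of_sum_ne_zero (h1.trans_ne one_ne_zero)
  have hsq {x : ι → ℂ} (hx : ∀ i, ‖x i‖ = 1) (h : ‖∑ i, (w i : ℂ) * x i ^ 2‖ = 1) (i : ι) :
      x i ^ 2 = x j ^ 2 := by
    simp only [← real_smul] at h
    exact eq_of_norm_sum_smul_eq hw h1 (fun i ↦ by simp [hx]) h i j
  exact four_le_card_of_sign_moments (ne_zero_of_norm_eq_one (hb j))
    (ne_zero_of_norm_eq_one (hc j)) (hsq hb hb2) (hsq hc hc2) (sum_ofReal_ne_zero h1) hwb hwc hwbc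

noncomputable def productStateSum {n₁ n₂ n₃ n₄ : ℕ} (t θ : ℝ) (t1 : Fin n₁ → ℝ)
    (β1 γ1 : Fin n₁ → ℂ) (t2 : Fin n₂ → ℝ) (β2 : Fin n₂ → ℂ) (t3 : Fin n₃ → ℝ)
    (β3 : Fin n₃ → ℂ) (t4 : Fin n₄ → ℝ) (β4 : Fin n₄ → ℂ) : Matrix (Fin 9) (Fin 9) ℂ :=
  ∑ i : Fin n₁, (t1 i : ℂ) • rank1 (z1 1 (β1 i) (γ1 i))
    + ∑ i : Fin n₂, ((t2 i : ℂ) / (t : ℂ) ^ 2) • rank1 (z2 t θ (β2 i))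
    + ∑ i : Fin n₃, ((t3 i : ℂ) / (t : ℂ) ^ 2) • rank1 (z3 t θ (β3 i))
    + ∑ i : Fin n₄, ((t4 i : ℂ) / (t : ℂ) ^ 2) • rank1 (z4 t θ (β4 i))

section ProductStateSum

variable {n₁ n₂ n₃ n₄ : ℕ} {t θ : ℝ} {t1 : Fin n₁ → ℝ} {β1 γ1 : Fin n₁ → ℂ}
  {t2 : Fin n₂ → ℝ} {β2 : Fin n₂ → ℂ} {t3 : Fin n₃ → ℝ} {β3 : Fin n₃ → ℂ}
  {t4 : Fin n₄ → ℝ} {β4 : Fin n₄ → ℂ}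

lemma productStateSum_apply (p q : Fin 9) :
    productStateSum t θ t1 β1 γ1 t2 β2 t3 β3 t4 β4 p q =
      ∑ i, (t1 i : ℂ) * (z1 1 (β1 i) (γ1 i) p * conj (z1 1 (β1 i) (γ1 i) q))
      + ∑ i, (t2 i : ℂ) / t ^ 2 * (z2 t θ (β2 i) p * conj (z2 t θ (β2 i) q))
      + ∑ i, (t3 i : ℂ) / t ^ 2 * (z3 t θ (β3 i) p * conj (z3 t θ (β3 i) q))
      + ∑ i, (t4 i : ℂ) / t ^ 2 * (z4 t θ (β4 i) p * conj (z4 t θ (β4 i) q)) := by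
  simp [productStateSum, rank1, vecMulVec_apply, Matrix.sum_apply]

lemma rho0_apply_of_eq (ht : 0 < t) (hb1 : ∀ i, ‖β1 i‖ = 1) (hg1 : ∀ i, ‖γ1 i‖ = 1)
    (hb2 : ∀ i, ‖β2 i‖ = 1) (hb3 : ∀ i, ‖β3 i‖ = 1) (hb4 : ∀ i, ‖β4 i‖ = 1)
    (h : rho0 θ t = productStateSum t θ t1 β1 γ1 t2 β2 t3 β3 t4 β4) :
    rho0 θ t 0 0 = ∑ i, (t1 i : ℂ) + ∑ i, (t3 i : ℂ) + ∑ i, (t4 i : ℂ) ∧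
    rho0 θ t 1 1 = ∑ i, (t1 i : ℂ) + t * ∑ i, (t4 i : ℂ) ∧
    rho0 θ t 3 3 = ∑ i, (t1 i : ℂ) + (t : ℂ)⁻¹ * ∑ i, (t4 i : ℂ) ∧
    rho0 θ t 5 5 = ∑ i, (t1 i : ℂ) + t * ∑ i, (t2 i : ℂ) ∧
    rho0 θ t 6 6 = ∑ i, (t1 i : ℂ) + t * ∑ i, (t3 i : ℂ) ∧
    rho0 θ t 1 8 = ∑ i, (t1 i : ℂ) * conj (β1 i) ∧
    rho0 θ t 6 4 = ∑ i, (t1 i : ℂ) * γ1 i ∧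
    rho0 θ t 0 5 = ∑ i, (t1 i : ℂ) * (conj (β1 i) * γ1 i) ∧
    rho0 θ t 7 8 = ∑ i, (t1 i : ℂ) * (conj (β1 i) * γ1 i)
      + (√t : ℂ)⁻¹ * conj (cexp (θ * I)) * ∑ i, (t2 i : ℂ) * conj (β2 i) ∧
    rho0 θ t 6 0 = ∑ i, (t1 i : ℂ) * γ1 i + √t * ∑ i, (t3 i : ℂ) * β3 i ∧
    rho0 θ t 1 0 = ∑ i, (t1 i : ℂ) * conj (β1 i) + √t * cexp (θ * I) * ∑ i, (t4 i : ℂ) * β4 i ∧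
    rho0 θ t 1 3 = ∑ i, (t1 i : ℂ) * conj (β1 i) ^ 2 + cexp (θ * I) * ∑ i, (t4 i : ℂ) * β4 i ^ 2 ∧
    rho0 θ t 6 2 = ∑ i, (t1 i : ℂ) * γ1 i ^ 2 + cexp (θ * I) * ∑ i, (t3 i : ℂ) * β3 i ^ 2 := by
  obtain ⟨s, hs, rfl⟩ : ∃ s, 0 < s ∧ t = s ^ 2 :=
    ⟨√t, Real.sqrt_pos.2 ht, (Real.sq_sqrt ht.le).symm⟩
  have hs' : (s : ℂ) ≠ 0 := by exact_mod_cast hs.ne'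
  -- with `conj β = β⁻¹` on the unit circle, each summand is a Laurent monomial in `s = √t`
  refine ⟨?_, ?_, ?_, ?_, ?_, ?_, ?_, ?_, ?_, ?_, ?_, ?_, ?_⟩ <;>
  · rw [h, productStateSum_apply]
    simp [mul_sum, z1, z2, z3, z4, kron, ← inv_eq_conj, hb1, hg1, hb2, hb3, hb4,
      Real.sqrt_sq hs.le]
    repeat' first
      | (refine sum_congr rfl fun i _ ↦ ?_
         field_simp [ne_zero_of_norm_eq_one (hb1 _), ne_zero_of_norm_eq_one (hg1 _),
           ne_zero_of_norm_eq_one (hb2 _), ne_zero_of_norm_eq_one (hb3 _),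
           ne_zero_of_norm_eq_one (hb4 _)])
      | congr 1

lemma sum_weights_eq_one_of_rho0_eq (ht : 0 < t) (hb1 : ∀ i, ‖β1 i‖ = 1) (hg1 : ∀ i, ‖γ1 i‖ = 1)
    (hb2 : ∀ i, ‖β2 i‖ = 1) (hb3 : ∀ i, ‖β3 i‖ = 1) (hb4 : ∀ i, ‖β4 i‖ = 1)
    (h : rho0 θ t = productStateSum t θ t1 β1 γ1 t2 β2 t3 β3 t4 β4) :
    ∑ i, t1 i = 1 ∧ ∑ i, t2 i = 1 ∧ ∑ i, t3 i = 1 ∧ ∑ i, t4 i = 1 := by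
  obtain ⟨e00, e11, e33, e55, e66, -⟩ := rho0_apply_of_eq ht hb1 hg1 hb2 hb3 hb4 h
  simp only [rho0, of_apply, Matrix.cons_val] at e00 e11 e33 e55 e66
  have ht' : (t : ℂ) ≠ 0 := by exact_mod_cast ht.ne'
  have h34 : ∑ i, (t3 i : ℂ) = ∑ i, (t4 i : ℂ) :=
    mul_left_cancel₀ ht' (by linear_combination e11 - e66)
  have h24 : ∑ i, (t2 i : ℂ) = ∑ i, (t4 i : ℂ) :=
    mul_left_cancel₀ ht' (by linear_combination e11 - e55)
  field_simp at e33
  -- with `u = ∑ t₄ - 1` and `v = ∑ t₁ - 1` the entries read `v + t u = t v + u = v + 2 u = 0`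
  have h4 : ∑ i, (t4 i : ℂ) = 1 := by
    linear_combination (2 * e11 + e33 - (2 + (t : ℂ)) * (e00 + h34)) / 3
  have h1 : ∑ i, (t1 i : ℂ) = 1 := by linear_combination -e00 - h34 - 2 * h4
  exact ⟨by exact_mod_cast h1, by exact_mod_cast h24.trans h4, by exact_mod_cast h34.trans h4,
    by exact_mod_cast h4⟩

lemma moments_eq_zero_of_rho0_eq (ht : 0 < t) (hb1 : ∀ i, ‖β1 i‖ = 1) (hg1 : ∀ i, ‖γ1 i‖ = 1)
    (hb2 : ∀ i, ‖β2 i‖ = 1) (hb3 : ∀ i, ‖β3 i‖ = 1) (hb4 : ∀ i, ‖β4 i‖ = 1)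
    (h : rho0 θ t = productStateSum t θ t1 β1 γ1 t2 β2 t3 β3 t4 β4) :
    ∑ i, (t1 i : ℂ) * conj (β1 i) = 0 ∧ ∑ i, (t1 i : ℂ) * γ1 i = 0 ∧
      ∑ i, (t1 i : ℂ) * (conj (β1 i) * γ1 i) = 0 ∧ ∑ i, (t2 i : ℂ) * conj (β2 i) = 0 ∧
      ∑ i, (t3 i : ℂ) * β3 i = 0 ∧ ∑ i, (t4 i : ℂ) * β4 i = 0 := by
  obtain ⟨-, -, -, -, -, e18, e64, e05, e78, e60, e10, -⟩ :=
    rho0_apply_of_eq ht hb1 hg1 hb2 hb3 hb4 h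
  simp only [rho0, of_apply, Matrix.cons_val] at e18 e64 e05 e78 e60 e10
  rw [← e18, zero_add, eq_comm] at e10
  rw [← e64, zero_add, eq_comm] at e60
  rw [← e05, zero_add, eq_comm] at e78
  have hs : (√t : ℂ) ≠ 0 := by exact_mod_cast (Real.sqrt_pos.2 ht).ne'
  refine ⟨e18.symm, e64.symm, e05.symm, ?_, ?_, ?_⟩
  · simpa [hs, exp_ne_zero] using e78
  · simpa [hs] using e60
  · simpa [hs, exp_ne_zero] using e10

lemma ten_le_of_rho0_eq (ht : 0 < t) (hp1 : ∀ i, 0 < t1 i) (hp2 : ∀ i, 0 < t2 i)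
    (hp3 : ∀ i, 0 < t3 i) (hp4 : ∀ i, 0 < t4 i) (hb1 : ∀ i, ‖β1 i‖ = 1) (hg1 : ∀ i, ‖γ1 i‖ = 1)
    (hb2 : ∀ i, ‖β2 i‖ = 1) (hb3 : ∀ i, ‖β3 i‖ = 1) (hb4 : ∀ i, ‖β4 i‖ = 1)
    (h : rho0 θ t = productStateSum t θ t1 β1 γ1 t2 β2 t3 β3 t4 β4) :
    10 ≤ n₁ + n₂ + n₃ + n₄ := by
  obtain ⟨w1, w2, w3, w4⟩ := sum_weights_eq_one_of_rho0_eq ht hb1 hg1 hb2 hb3 hb4 h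
  obtain ⟨m1β, m1γ, m1βγ, m2, m3, m4⟩ := moments_eq_zero_of_rho0_eq ht hb1 hg1 hb2 hb3 hb4 h
  have hb1' : ∀ i, ‖conj (β1 i)‖ = 1 := by simpa using hb1
  have hn1 := three_le_of_moments hp1 hb1' hg1 w1 m1β m1γ m1βγ
  have hn2 := two_le_of_sum_mul_eq_zero hp2 (by simpa using hb2) w2 m2
  have hn3 := two_le_of_sum_mul_eq_zero hp3 hb3 w3 m3
  have hn4 := two_le_of_sum_mul_eq_zero hp4 hb4 w4 m4
  suffices n₃ = 2 → n₄ = 2 → 4 ≤ n₁ by omega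
  rintro rfl rfl
  obtain ⟨-, -, -, -, -, -, -, -, -, -, -, e13, e62⟩ :=
    rho0_apply_of_eq ht hb1 hg1 hb2 hb3 hb4 h
  simp only [rho0, of_apply, Matrix.cons_val] at e13 e62
  simpa using four_le_card_of_moments hp1 hb1' hg1 w1 m1β m1γ m1βγ
    (by rw [eq_neg_of_add_eq_zero_left e13.symm, norm_neg, norm_mul, norm_exp_ofReal_mul_I,
      norm_sum_mul_sq_eq_one hp4 hb4 w4 m4, one_mul])
    (by rw [eq_neg_of_add_eq_zero_left e62.symm, norm_neg, norm_mul, norm_exp_ofReal_mul_I,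
      norm_sum_mul_sq_eq_one hp3 hb3 w3 m3, one_mul])

end ProductStateSum

theorem rho0_no_nine_term_decomposition_general (t θ : ℝ) (ht : 0 < t) :
    (¬ ∃ (t1 : Fin 3 → ℝ) (β1 γ1 : Fin 3 → ℂ)
        (t2 : Fin 2 → ℝ) (β2 : Fin 2 → ℂ)
        (t3 : Fin 2 → ℝ) (β3 : Fin 2 → ℂ)
        (t4 : Fin 2 → ℝ) (β4 : Fin 2 → ℂ),
        (∀ i, 0 < t1 i) ∧ (∀ i, 0 < t2 i) ∧ (∀ i, 0 < t3 i) ∧ (∀ i, 0 < t4 i) ∧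
        (∀ i, ‖β1 i‖ = 1) ∧ (∀ i, ‖γ1 i‖ = 1) ∧
        (∀ i, ‖β2 i‖ = 1) ∧ (∀ i, ‖β3 i‖ = 1) ∧
        (∀ i, ‖β4 i‖ = 1) ∧
        rho0 θ t =
          ∑ i : Fin 3, (t1 i : ℂ) • rank1 (z1 1 (β1 i) (γ1 i))
          + ∑ i : Fin 2, ((t2 i : ℂ) / (t : ℂ) ^ 2) • rank1 (z2 t θ (β2 i))
          + ∑ i : Fin 2, ((t3 i : ℂ) / (t : ℂ) ^ 2) • rank1 (z3 t θ (β3 i))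
          + ∑ i : Fin 2, ((t4 i : ℂ) / (t : ℂ) ^ 2) • rank1 (z4 t θ (β4 i))) ∧
    (∀ (n₁ n₂ n₃ n₄ : ℕ)
        (t1 : Fin n₁ → ℝ) (β1 γ1 : Fin n₁ → ℂ)
        (t2 : Fin n₂ → ℝ) (β2 : Fin n₂ → ℂ)
        (t3 : Fin n₃ → ℝ) (β3 : Fin n₃ → ℂ)
        (t4 : Fin n₄ → ℝ) (β4 : Fin n₄ → ℂ),
        (∀ i, 0 < t1 i) → (∀ i, 0 < t2 i) → (∀ i, 0 < t3 i) → (∀ i, 0 < t4 i) →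
        (∀ i, ‖β1 i‖ = 1) → (∀ i, ‖γ1 i‖ = 1) →
        (∀ i, ‖β2 i‖ = 1) → (∀ i, ‖β3 i‖ = 1) →
        (∀ i, ‖β4 i‖ = 1) →
        rho0 θ t =
          ∑ i : Fin n₁, (t1 i : ℂ) • rank1 (z1 1 (β1 i) (γ1 i))
          + ∑ i : Fin n₂, ((t2 i : ℂ) / (t : ℂ) ^ 2) • rank1 (z2 t θ (β2 i))
          + ∑ i : Fin n₃, ((t3 i : ℂ) / (t : ℂ) ^ 2) • rank1 (z3 t θ (β3 i))
          + ∑ i : Fin n₄, ((t4 i : ℂ) / (t : ℂ) ^ 2) • rank1 (z4 t θ (β4 i)) →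
        10 ≤ n₁ + n₂ + n₃ + n₄) := by
  refine ⟨?_, fun _ _ _ _ _ _ _ _ _ _ _ _ _ ↦ ten_le_of_rho0_eq ht⟩
  rintro ⟨t1, β1, γ1, t2, β2, t3, β3, t4, β4, hp1, hp2, hp3, hp4, hb1, hg1, hb2, hb3, hb4, h⟩
  have := ten_le_of_rho0_eq ht hp1 hp2 hp3 hp4 hb1 hg1 hb2 hb3 hb4 h
  omega

/-- There is no decomposition of `ρ₀(θ,t)` with `n₁ = 3` and `n₂ = n₃ = n₄ = 2`;
consequently every such decomposition uses at least ten pure product states. -/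
theorem rho0_no_nine_term_decomposition (t θ : ℝ) (ht : 0 < t)
    (hθl : -(Real.pi / 3) < θ) (hθr : θ < Real.pi / 3) (hne : ¬(θ = 0 ∧ t = 1)) :
    (¬ ∃ (t1 : Fin 3 → ℝ) (β1 γ1 : Fin 3 → ℂ)
        (t2 : Fin 2 → ℝ) (β2 : Fin 2 → ℂ)
        (t3 : Fin 2 → ℝ) (β3 : Fin 2 → ℂ)
        (t4 : Fin 2 → ℝ) (β4 : Fin 2 → ℂ),
        (∀ i, 0 < t1 i) ∧ (∀ i, 0 < t2 i) ∧ (∀ i, 0 < t3 i) ∧ (∀ i, 0 < t4 i) ∧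
        (∀ i, ‖β1 i‖ = 1) ∧ (∀ i, ‖γ1 i‖ = 1) ∧
        (∀ i, ‖β2 i‖ = 1) ∧ (∀ i, ‖β3 i‖ = 1) ∧
        (∀ i, ‖β4 i‖ = 1) ∧
        rho0 θ t =
          ∑ i : Fin 3, (t1 i : ℂ) • rank1 (z1 1 (β1 i) (γ1 i))
          + ∑ i : Fin 2, ((t2 i : ℂ) / (t : ℂ) ^ 2) • rank1 (z2 t θ (β2 i))
          + ∑ i : Fin 2, ((t3 i : ℂ) / (t : ℂ) ^ 2) • rank1 (z3 t θ (β3 i))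
          + ∑ i : Fin 2, ((t4 i : ℂ) / (t : ℂ) ^ 2) • rank1 (z4 t θ (β4 i))) ∧
    (∀ (n₁ n₂ n₃ n₄ : ℕ)
        (t1 : Fin n₁ → ℝ) (β1 γ1 : Fin n₁ → ℂ)
        (t2 : Fin n₂ → ℝ) (β2 : Fin n₂ → ℂ)
        (t3 : Fin n₃ → ℝ) (β3 : Fin n₃ → ℂ)
        (t4 : Fin n₄ → ℝ) (β4 : Fin n₄ → ℂ),
        (∀ i, 0 < t1 i) → (∀ i, 0 < t2 i) → (∀ i, 0 < t3 i) → (∀ i, 0 < t4 i) →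
        (∀ i, ‖β1 i‖ = 1) → (∀ i, ‖γ1 i‖ = 1) →
        (∀ i, ‖β2 i‖ = 1) → (∀ i, ‖β3 i‖ = 1) →
        (∀ i, ‖β4 i‖ = 1) →
        rho0 θ t =
          ∑ i : Fin n₁, (t1 i : ℂ) • rank1 (z1 1 (β1 i) (γ1 i))
          + ∑ i : Fin n₂, ((t2 i : ℂ) / (t : ℂ) ^ 2) • rank1 (z2 t θ (β2 i))
          + ∑ i : Fin n₃, ((t3 i : ℂ) / (t : ℂ) ^ 2) • rank1 (z3 t θ (β3 i))
          + ∑ i : Fin n₄, ((t4 i : ℂ) / (t : ℂ) ^ 2) • rank1 (z4 t θ (β4 i)) →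
        10 ≤ n₁ + n₂ + n₃ + n₄) :=
  rho0_no_nine_term_decomposition_general t θ ht
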